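/- Let (Σ, μ) be a measure space with μ a finite measure satisfying μ(Σ) > 0, let p₀ ∈ (1, ∞), let S be a nonempty set of measurable functions u : Σ → ℝ each satisfying 0 < ‖u‖_{L^{p₀}(μ)} < ∞, and let F : S → ℝ satisfy F(u) ≥ 0 for all u ∈ S. For p ∈ (1, p₀] define λ(p) = inf_{u ∈ S} F(u) / ‖u‖_{L^{p}(μ)}². Then λ(p) → λ(p₀) as p → p₀ from below. -/

import Mathlib

/-!
Write `N_p(u)` for the `L^p` norm. On a finite measure space Hölder's inequality gives
`N_p(u) ≤ μ(Σ)^(1/p - 1/p₀) N_{p₀}(u)`, hence `λ(p₀) ≤ μ(Σ)^(2/p - 2/p₀) λ(p)`, which bounds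
`λ(p)` from below by a quantity tending to `λ(p₀)`. From above, `λ(p) ≤ F(u)/N_p(u)²` for each
fixed `u`, and `p ↦ N_p(u)` is left-continuous at `p₀` by dominated convergence
(`|u|^p ≤ 1 + |u|^{p₀}` for `p ≤ p₀`), so `limsup λ(p) ≤ F(u)/N_{p₀}(u)²` for every `u ∈ S`.
-/
open MeasureTheory Real Filter
open scoped ENNReal Topology

theorem tendsto_csInf_image_of_le_mul {ι α : Type*} {l : Filter ι} {f : ι → α → ℝ} {g : α → ℝ}
    {c : ι → ℝ} {S : Set α} (hS : S.Nonempty) (hg : BddBelow (g '' S))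
    (hf : ∀ u ∈ S, Tendsto (fun i => f i u) l (𝓝 (g u)))
    (hc : Tendsto c l (𝓝 1)) (hc0 : ∀ᶠ i in l, 0 < c i)
    (hle : ∀ᶠ i in l, ∀ u ∈ S, g u ≤ c i * f i u) :
    Tendsto (fun i => sInf (f i '' S)) l (𝓝 (sInf (g '' S))) := by
  have hlower : ∀ᶠ i in l, ∀ v ∈ f i '' S, sInf (g '' S) / c i ≤ v := by
    filter_upwards [hc0, hle] with i hci hlei
    rintro _ ⟨u, hu, rfl⟩
    rw [div_le_iff₀' hci]
    exact (csInf_le hg ⟨u, hu, rfl⟩).trans (hlei u hu)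
  rw [tendsto_order]
  constructor
  · intro a ha
    have hdiv : Tendsto (fun i => sInf (g '' S) / c i) l (𝓝 (sInf (g '' S) / 1)) :=
      tendsto_const_nhds.div hc one_ne_zero
    rw [div_one] at hdiv
    filter_upwards [hdiv.eventually_const_lt ha, hlower] with i hi hlowi
    exact hi.trans_le (le_csInf (hS.image _) hlowi)
  · intro a ha
    obtain ⟨_, ⟨u, hu, rfl⟩, hua⟩ := exists_lt_of_csInf_lt (hS.image g) ha
    filter_upwards [(hf u hu).eventually_lt_const hua, hlower] with i hi hlowi
    exact (csInf_le ⟨_, hlowi⟩ ⟨u, hu, rfl⟩).trans_lt hi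

theorem ENNReal.rpow_le_one_add_rpow (a : ℝ≥0∞) {p q : ℝ} (hp : 0 ≤ p) (hpq : p ≤ q) :
    a ^ p ≤ 1 + a ^ q := by
  rcases le_total a 1 with ha | ha
  · exact (ENNReal.rpow_le_one ha hp).trans le_self_add
  · exact (ENNReal.rpow_le_rpow_of_exponent_le ha hpq).trans le_add_self

theorem ENNReal.continuousAt_ofReal_rpow {a p : ℝ} (ha : 0 ≤ a) (hp : 0 < p) :
    ContinuousAt (fun q => ENNReal.ofReal a ^ q) p := by
  have h : (fun q => ENNReal.ofReal (a ^ q)) =ᶠ[𝓝 p] fun q => ENNReal.ofReal a ^ q := by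
    filter_upwards [eventually_gt_nhds hp] with q hq
    exact (ENNReal.ofReal_rpow_of_nonneg ha hq.le).symm
  exact (ENNReal.continuous_ofReal.continuousAt.comp
    (Real.continuousAt_const_rpow' hp.ne')).congr_of_eventuallyEq h.symm

section LpNorm

variable {α E : Type*} [MeasurableSpace α] {μ : Measure α} [NormedAddCommGroup E] {u : α → E}

theorem eLpNorm'_eq_lintegral_ofReal_abs_rpow (u : α → ℝ) (p : ℝ) :
    eLpNorm' u p μ = (∫⁻ x, ENNReal.ofReal |u x| ^ p ∂μ) ^ (1 / p) := by
  simp only [eLpNorm', Real.enorm_eq_ofReal_abs]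

variable [IsFiniteMeasure μ]

theorem tendsto_lintegral_enorm_rpow_nhdsLT (hu : AEStronglyMeasurable u μ) {p₀ : ℝ}
    (hp₀ : 0 < p₀) (hfin : ∫⁻ x, ‖u x‖ₑ ^ p₀ ∂μ ≠ ∞) :
    Tendsto (fun p => ∫⁻ x, ‖u x‖ₑ ^ p ∂μ) (𝓝[<] p₀) (𝓝 (∫⁻ x, ‖u x‖ₑ ^ p₀ ∂μ)) := by
  have hpos : ∀ᶠ p in 𝓝[<] p₀, 0 < p := eventually_nhdsWithin_of_eventually_nhds
    (eventually_gt_nhds hp₀)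
  refine tendsto_lintegral_filter_of_dominated_convergence' (fun x => 1 + ‖u x‖ₑ ^ p₀)
    (Eventually.of_forall fun p => hu.enorm.pow_const p) ?_ ?_ ?_
  · filter_upwards [self_mem_nhdsWithin, hpos] with p hpp₀ hp
    exact Eventually.of_forall fun x => ENNReal.rpow_le_one_add_rpow _ hp.le hpp₀.le
  · rw [lintegral_add_left measurable_const, lintegral_const, one_mul]
    exact ENNReal.add_ne_top.2 ⟨measure_ne_top μ _, hfin⟩
  · refine Eventually.of_forall fun x => ?_
    rw [← ofReal_norm]
    exact (ENNReal.continuousAt_ofReal_rpow (norm_nonneg _) hp₀).tendsto.mono_left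
      nhdsWithin_le_nhds

theorem tendsto_toReal_eLpNorm'_nhdsLT (hu : AEStronglyMeasurable u μ) {p₀ : ℝ}
    (hp₀ : 0 < p₀) (hfin : eLpNorm' u p₀ μ ≠ ∞) :
    Tendsto (fun p => (eLpNorm' u p μ).toReal) (𝓝[<] p₀) (𝓝 (eLpNorm' u p₀ μ).toReal) := by
  rw [eLpNorm', Ne, ENNReal.rpow_eq_top_iff_of_pos (one_div_pos.2 hp₀)] at hfin
  have hint := (ENNReal.tendsto_toReal hfin).comp (tendsto_lintegral_enorm_rpow_nhdsLT hu hp₀ hfin)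
  have hexp : Tendsto (fun p : ℝ => 1 / p) (𝓝[<] p₀) (𝓝 (1 / p₀)) :=
    (tendsto_const_nhds.div tendsto_id hp₀.ne').mono_left nhdsWithin_le_nhds
  simp only [eLpNorm', ← ENNReal.toReal_rpow]
  exact (Real.continuousAt_rpow_of_pos _ (one_div_pos.2 hp₀)).tendsto.comp (hint.prodMk_nhds hexp)

theorem div_sq_toReal_eLpNorm'_le (hμ : μ ≠ 0) (hu : AEStronglyMeasurable u μ) {p q a : ℝ}
    (hp : 0 < p) (hpq : p ≤ q) (h0 : eLpNorm' u q μ ≠ 0) (hfin : eLpNorm' u q μ ≠ ∞)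
    (ha : 0 ≤ a) :
    a / (eLpNorm' u q μ).toReal ^ 2 ≤
      ((μ Set.univ).toReal ^ (1 / p - 1 / q)) ^ 2 * (a / (eLpNorm' u p μ).toReal ^ 2) := by
  have hholder := eLpNorm'_le_eLpNorm'_mul_rpow_measure_univ hp hpq hu
  have hexp : 0 ≤ 1 / p - 1 / q := sub_nonneg.2 (one_div_le_one_div_of_le hp hpq)
  have hfin' : eLpNorm' u q μ * μ Set.univ ^ (1 / p - 1 / q) ≠ ∞ :=
    ENNReal.mul_ne_top hfin (ENNReal.rpow_ne_top_of_nonneg hexp (measure_ne_top μ _))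
  have hp0 : eLpNorm' u p μ ≠ 0 := by
    rwa [Ne, eLpNorm'_eq_zero_iff hp hu, ← eLpNorm'_eq_zero_iff (hp.trans_le hpq) hu]
  have hNp : 0 < (eLpNorm' u p μ).toReal :=
    ENNReal.toReal_pos hp0 (ne_top_of_le_ne_top hfin' hholder)
  have hm : 0 < (μ Set.univ).toReal := ENNReal.toReal_pos (Measure.measure_univ_ne_zero.2 hμ)
    (measure_ne_top μ _)
  have hle : (eLpNorm' u p μ).toReal ≤
      (eLpNorm' u q μ).toReal * (μ Set.univ).toReal ^ (1 / p - 1 / q) := by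
    rw [ENNReal.toReal_rpow, ← ENNReal.toReal_mul]
    exact ENNReal.toReal_mono hfin' hholder
  calc a / (eLpNorm' u q μ).toReal ^ 2
      = ((μ Set.univ).toReal ^ (1 / p - 1 / q)) ^ 2 * a /
          ((eLpNorm' u q μ).toReal * (μ Set.univ).toReal ^ (1 / p - 1 / q)) ^ 2 := by
        field_simp
    _ ≤ ((μ Set.univ).toReal ^ (1 / p - 1 / q)) ^ 2 * a / (eLpNorm' u p μ).toReal ^ 2 := by
        gcongr
    _ = _ := mul_div_assoc _ _ _

end LpNorm

/-- Convergence of the subcritical infima to the critical one: on a finite measure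
space with `μ(Σ) > 0`, for a nonempty family `S` of measurable functions with
`0 < ‖u‖_{L^{p₀}} < ∞` and a nonnegative functional `F`, the infima
`λ(p) = inf_{u ∈ S} F(u)/‖u‖_{L^p}²` satisfy `λ(p) → λ(p₀)` as `p → p₀` from below. -/
theorem stmt_6 {Ω : Type*} [MeasurableSpace Ω] (μ : Measure Ω) [IsFiniteMeasure μ]
    (hμ : 0 < μ Set.univ) (p₀ : ℝ) (hp₀ : 1 < p₀)
    (S : Set (Ω → ℝ)) (hS : S.Nonempty) (hmeas : ∀ u ∈ S, Measurable u)
    (hnorm : ∀ u ∈ S, 0 < (∫⁻ x, ENNReal.ofReal |u x| ^ p₀ ∂μ) ^ (1 / p₀)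
        ∧ (∫⁻ x, ENNReal.ofReal |u x| ^ p₀ ∂μ) ^ (1 / p₀) ≠ ⊤)
    (F : (Ω → ℝ) → ℝ) (hF : ∀ u ∈ S, 0 ≤ F u) :
    Tendsto (fun p : ℝ => sInf ((fun u => F u /
          (((∫⁻ x, ENNReal.ofReal |u x| ^ p ∂μ) ^ (1 / p)).toReal) ^ 2) '' S))
        (nhdsWithin p₀ (Set.Iio p₀))
        (nhds (sInf ((fun u => F u /
          (((∫⁻ x, ENNReal.ofReal |u x| ^ p₀ ∂μ) ^ (1 / p₀)).toReal) ^ 2) '' S))) := by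
  simp only [← eLpNorm'_eq_lintegral_ofReal_abs_rpow] at hnorm ⊢
  have hp₀0 : 0 < p₀ := one_pos.trans hp₀
  have hm : 0 < (μ Set.univ).toReal := ENNReal.toReal_pos hμ.ne' (measure_ne_top μ _)
  refine tendsto_csInf_image_of_le_mul (c := fun p => ((μ Set.univ).toReal ^ (1 / p - 1 / p₀)) ^ 2)
    hS ⟨0, ?_⟩ (fun u hu => ?_) ?_ (Eventually.of_forall fun p => by positivity) ?_
  · rintro _ ⟨u, hu, rfl⟩
    exact div_nonneg (hF u hu) (sq_nonneg _)
  · have hN := tendsto_toReal_eLpNorm'_nhdsLT (hmeas u hu).aestronglyMeasurable hp₀0 (hnorm u hu).2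
    exact tendsto_const_nhds.div (hN.pow 2)
      (pow_ne_zero 2 (ENNReal.toReal_pos (hnorm u hu).1.ne' (hnorm u hu).2).ne')
  · have hc : ContinuousAt (fun p : ℝ => ((μ Set.univ).toReal ^ (1 / p - 1 / p₀)) ^ 2) p₀ := by
      fun_prop (disch := positivity)
    simpa using hc.tendsto.mono_left nhdsWithin_le_nhds
  · filter_upwards [self_mem_nhdsWithin, eventually_nhdsWithin_of_eventually_nhds
      (eventually_gt_nhds hp₀0)] with p hpp₀ hp u hu
    exact div_sq_toReal_eLpNorm'_le (Measure.measure_univ_pos.1 hμ)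
      (hmeas u hu).aestronglyMeasurable hp hpp₀.le (hnorm u hu).1.ne' (hnorm u hu).2 (hF u hu)
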